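/- Let T be a finite connected tree with a weight function wt on vertices taking nonnegative integer values, with total weight m, such that T is stable (for every vertex v, wt(v) plus the number of edges at v is at least 3), and suppose there is no edge e of T such that the two subtrees obtained by deleting e each have total weight m/2. Then T admits a central vertex, i.e., a vertex v such that every connected component of T minus v has total weight strictly less than m/2. -/

import Mathlib

/-! Weighted trees: a finite connected tree with nonnegative integer vertex
weights.  `branchWeight G wt v u` is the total weight of the connected
component containing `u` of the graph obtained from `G` by removing the
vertex `v` (implemented by deleting all edges incident to `v` and discarding
`v` itself).  A vertex is central if every such complementary component has
total weight `< m/2`, where `m` is the total weight. -/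

noncomputable def totalWeight {V : Type*} [Fintype V] (wt : V → ℕ) : ℕ :=
  ∑ v, wt v

open Classical in
noncomputable def branchWeight {V : Type*} [Fintype V] (G : SimpleGraph V)
    (wt : V → ℕ) (v u : V) : ℕ :=
  ∑ w, if (G.deleteEdges (G.incidenceSet v)).Reachable u w ∧ w ≠ v then wt w else 0

/-- `v` is a central vertex: every connected component of `G` minus `v`
has total weight strictly less than half the total weight. -/
def IsCentral {V : Type*} [Fintype V] (G : SimpleGraph V) (wt : V → ℕ) (v : V) : Prop :=
  ∀ u, u ≠ v → 2 * branchWeight G wt v u < totalWeight wt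

open Classical in
/-- Weight of the side containing `a` after deleting the edge `{a,b}`. -/
noncomputable def sideWeight {V : Type*} [Fintype V] (G : SimpleGraph V)
    (wt : V → ℕ) (a b : V) : ℕ :=
  ∑ w, if (G.deleteEdges {s(a, b)}).Reachable a w then wt w else 0

/-! Take a vertex `v` minimising the weighted distance sum `∑ w, wt w * dist v w`. For a
neighbour `u` of `v`, the vertices on `u`'s side of the edge `uv` are exactly those closer to
`u` than to `v`, so moving from `v` to `u` changes the sum by `m - 2 * (weight of u's side)`.
Minimality bounds every branch at `v` by `m/2`, and the absence of a halving edge makes the bound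
strict. -/

open Finset

namespace SimpleGraph

variable {V : Type*} {G : SimpleGraph V} {u v w : V}

theorem IsTree.dist_eq_add_one_or (hG : G.IsTree) (huv : G.Adj u v) (w : V) :
    G.dist v w = G.dist u w + 1 ∨ G.dist u w = G.dist v w + 1 := by
  rw [G.dist_comm (u := v), G.dist_comm (u := u)]
  exact (hG.dist_eq_dist_add_one_of_adj w huv).symm

theorem reachable_deleteEdges_of_dist_lt (huw : G.Reachable u w)
    (hlt : G.dist u w < G.dist v w) : (G.deleteEdges {s(u, v)}).Reachable u w := by
  classical
  obtain ⟨p, hp⟩ := huw.exists_walk_length_eq_dist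
  refine reachable_deleteEdges_iff_exists_walk.mpr ⟨p, fun he => ?_⟩
  have hv := p.snd_mem_support_of_mem_edges he
  have := G.dist_le (p.dropUntil v hv)
  have := p.length_dropUntil_le_length hv
  omega

theorem IsTree.reachable_deleteEdges_iff_dist_lt (hG : G.IsTree) (huv : G.Adj u v) :
    (G.deleteEdges {s(u, v)}).Reachable u w ↔ G.dist u w < G.dist v w := by
  refine ⟨fun hu => ?_, reachable_deleteEdges_of_dist_lt (hG.connected u w)⟩
  rcases hG.dist_eq_add_one_or huv w with h | h
  · omega
  · have hv : (G.deleteEdges {s(v, u)}).Reachable v w :=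
      reachable_deleteEdges_of_dist_lt (hG.connected v w) (by omega)
    rw [Sym2.eq_swap] at hv
    exact absurd (hu.trans hv.symm) (isAcyclic_iff_forall_adj_isBridge.mp hG.isAcyclic huv)

theorem reachable_deleteIncidenceSet_of_notMem_support {x y : V} (p : G.Walk x y)
    (hv : v ∉ p.support) : (G.deleteIncidenceSet v).Reachable x y := by
  classical
  exact ⟨p.toDeleteEdges _ fun _ he hinc => hv (p.mem_support_of_mem_edges he hinc.2)⟩

theorem IsTree.exists_adj_reachable_deleteIncidenceSet (hG : G.IsTree) (hwv : w ≠ v) :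
    ∃ u, G.Adj v u ∧ (G.deleteIncidenceSet v).Reachable u w := by
  obtain ⟨p, hp⟩ := (hG.connected v w).exists_isPath
  cases p with
  | nil => exact absurd rfl hwv
  | cons hvu q =>
    rw [Walk.cons_isPath_iff] at hp
    exact ⟨_, hvu, reachable_deleteIncidenceSet_of_notMem_support q hp.2⟩

theorem IsTree.reachable_deleteIncidenceSet_iff (hG : G.IsTree) (hvu : G.Adj v u) :
    (G.deleteIncidenceSet v).Reachable u w ∧ w ≠ v ↔ (G.deleteEdges {s(u, v)}).Reachable u w := by
  classical
  refine ⟨fun h => h.1.mono (deleteEdges_anti ?_), fun ⟨p⟩ => ?_⟩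
  · rintro _ rfl
    exact ⟨hvu.symm, Sym2.mem_mk_right u v⟩
  have hv : v ∉ p.support := fun hv =>
    isAcyclic_iff_forall_adj_isBridge.mp hG.isAcyclic hvu.symm ⟨p.takeUntil v hv⟩
  refine ⟨reachable_deleteIncidenceSet_of_notMem_support (p.mapLe (deleteEdges_le _)) ?_, ?_⟩
  · rwa [Walk.support_mapLe_eq_support]
  · rintro rfl
    exact hv p.end_mem_support

variable [Fintype V]

noncomputable def weightedDistSum (G : SimpleGraph V) (wt : V → ℕ) (x : V) : ℕ :=
  ∑ w, wt w * G.dist x w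

theorem IsTree.sideWeight_eq_sum_dist_lt (hG : G.IsTree) (huv : G.Adj u v) (wt : V → ℕ) :
    sideWeight G wt u v = ∑ w, if G.dist u w < G.dist v w then wt w else 0 := by
  simp only [sideWeight, hG.reachable_deleteEdges_iff_dist_lt huv]

theorem IsTree.sideWeight_add_sideWeight (hG : G.IsTree) (huv : G.Adj u v) (wt : V → ℕ) :
    sideWeight G wt u v + sideWeight G wt v u = totalWeight wt := by
  rw [hG.sideWeight_eq_sum_dist_lt huv, hG.sideWeight_eq_sum_dist_lt huv.symm, totalWeight,
    ← sum_add_distrib]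
  refine sum_congr rfl fun w _ => ?_
  rcases hG.dist_eq_add_one_or huv w with h | h <;> split_ifs <;> omega

/-- Moving from `v` to its neighbour `u` brings the vertices on `u`'s side one step closer and
all others one step further away. -/
theorem IsTree.weightedDistSum_add_two_mul_sideWeight (hG : G.IsTree) (huv : G.Adj u v)
    (wt : V → ℕ) :
    weightedDistSum G wt u + 2 * sideWeight G wt u v = weightedDistSum G wt v + totalWeight wt := by
  rw [hG.sideWeight_eq_sum_dist_lt huv, weightedDistSum, weightedDistSum, totalWeight, mul_sum,
    ← sum_add_distrib, ← sum_add_distrib]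
  refine sum_congr rfl fun w _ => ?_
  rcases hG.dist_eq_add_one_or huv w with h | h
  · rw [if_pos (by omega), h]
    ring
  · rw [if_neg (by omega), h]
    ring

theorem IsTree.branchWeight_eq_sideWeight (hG : G.IsTree) (hvu : G.Adj v u)
    (hw : (G.deleteIncidenceSet v).Reachable u w) (wt : V → ℕ) :
    branchWeight G wt v w = sideWeight G wt u v := by
  classical
  have hside (x : V) : (G.deleteEdges (G.incidenceSet v)).Reachable w x ∧ x ≠ v ↔
      (G.deleteEdges {s(u, v)}).Reachable u x :=
    (and_congr_left' ⟨hw.trans, hw.symm.trans⟩).trans (hG.reachable_deleteIncidenceSet_iff hvu)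
  exact sum_congr rfl fun x _ => if_congr (hside x) rfl rfl

end SimpleGraph

open SimpleGraph in
theorem exists_central_vertex_general {V : Type*} [Fintype V] (G : SimpleGraph V)
    (wt : V → ℕ)
    (htree : G.IsTree)
    (hstar : ¬ ∃ a b, G.Adj a b ∧
      2 * sideWeight G wt a b = totalWeight wt ∧
      2 * sideWeight G wt b a = totalWeight wt) :
    ∃ v, IsCentral G wt v := by
  have : Nonempty V := htree.connected.nonempty
  obtain ⟨v, -, hmin⟩ := exists_min_image univ (weightedDistSum G wt) univ_nonempty
  refine ⟨v, fun w hwv => ?_⟩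
  obtain ⟨u, hvu, hw⟩ := htree.exists_adj_reachable_deleteIncidenceSet hwv
  rw [htree.branchWeight_eq_sideWeight hvu hw]
  have hmove := htree.weightedDistSum_add_two_mul_sideWeight hvu.symm wt
  have hsplit := htree.sideWeight_add_sideWeight hvu.symm wt
  have hle := hmin u (mem_univ u)
  have hne : 2 * sideWeight G wt u v ≠ totalWeight wt :=
    fun h => hstar ⟨u, v, hvu.symm, h, by omega⟩
  omega

/-- A stable weighted tree with no edge splitting the total weight `m` into two
halves of weight exactly `m/2` admits a central vertex. -/
theorem exists_central_vertex {V : Type*} [Fintype V] (G : SimpleGraph V)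
    [DecidableRel G.Adj] (wt : V → ℕ)
    (htree : G.IsTree)
    (hstable : ∀ v, 3 ≤ wt v + G.degree v)
    (hstar : ¬ ∃ a b, G.Adj a b ∧
      2 * sideWeight G wt a b = totalWeight wt ∧
      2 * sideWeight G wt b a = totalWeight wt) :
    ∃ v, IsCentral G wt v :=
  exists_central_vertex_general G wt htree hstar
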